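/- Assume in addition that P has full support on ℝ^{𝒴₀} and is absolutely continuous with respect to Lebesgue measure. Then: (a) for every U : 𝒴 → ℝ (extended by U_0 = 0), for P-almost every ε the maximum of ŷ ↦ U_ŷ + ε_ŷ over 𝒴₀ is attained at a unique ŷ; (b) the function G is strictly convex and differentiable on ℝ^{𝒴}, and for every y ∈ 𝒴 its partial derivative satisfies ∂G/∂U_y(U) = P({ε : U_y + ε_y > U_ŷ + ε_ŷ for all ŷ ∈ 𝒴₀ with ŷ ≠ y}), and this probability lies strictly between 0 and 1. -/

import Mathlib

open MeasureTheory

noncomputable section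

/-- Extension of `U : 𝒴 → ℝ` to `𝒴₀ = Option 𝒴` by `U_0 = 0`. -/
def optExt {Y : Type*} (U : Y → ℝ) : Option Y → ℝ := fun yo => yo.elim 0 U

/-- Maximum of a function over a finite nonempty type. -/
def fmax {ι : Type*} [Fintype ι] [Nonempty ι] (f : ι → ℝ) : ℝ :=
  Finset.univ.sup' Finset.univ_nonempty f

variable {Y : Type*} [Fintype Y] [Nonempty Y] [DecidableEq Y]

/-- The Emax operator `G(U) = ∫ max_{ŷ ∈ 𝒴₀} (U_ŷ + ε_ŷ) dP(ε)`. -/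
def Emax (P : Measure (Option Y → ℝ)) (U : Y → ℝ) : ℝ :=
  ∫ ε, fmax (fun yo => optExt U yo + ε yo) ∂P

section AuxLemmas
lemma le_fmax {ι : Type*} [Fintype ι] [Nonempty ι] (f : ι → ℝ) (i : ι) : f i ≤ fmax f :=
  Finset.le_sup' f (Finset.mem_univ i)

lemma fmax_le {ι : Type*} [Fintype ι] [Nonempty ι] {f : ι → ℝ} {a : ℝ} (h : ∀ i, f i ≤ a) :
    fmax f ≤ a :=
  Finset.sup'_le _ _ fun i _ => h i

lemma fmax_lt {ι : Type*} [Fintype ι] [Nonempty ι] {f : ι → ℝ} {a : ℝ} (h : ∀ i, f i < a) :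
    fmax f < a :=
  (Finset.sup'_lt_iff _).2 fun i _ => h i

lemma exists_fmax {ι : Type*} [Fintype ι] [Nonempty ι] (f : ι → ℝ) : ∃ i, fmax f = f i := by
  obtain ⟨i, -, hi⟩ := Finset.exists_mem_eq_sup' (Finset.univ_nonempty (α := ι)) f
  exact ⟨i, hi⟩

lemma abs_fmax_le {ι : Type*} [Fintype ι] [Nonempty ι] (f : ι → ℝ) :
    |fmax f| ≤ fmax (fun i => |f i|) := by
  obtain ⟨i, hi⟩ := exists_fmax f
  rw [hi]
  exact le_fmax (fun i => |f i|) i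


lemma optExt_le_add (V W : Y → ℝ) (yo : Option Y) : optExt V yo ≤ optExt W yo + ‖V - W‖ := by
  cases yo with
  | none => simpa [optExt] using norm_nonneg (V - W)
  | some y =>
    have h := norm_le_pi_norm (V - W) y
    simp only [Pi.sub_apply, Real.norm_eq_abs] at h
    have := (abs_le.mp h).2
    simp only [optExt, Option.elim]
    linarith

lemma optExt_nonneg_bound (U : Y → ℝ) (yo : Option Y) :
    optExt U yo ≤ fmax (fun yo => |optExt U yo|) :=
  (le_abs_self _).trans (le_fmax (fun yo => |optExt U yo|) yo)

lemma fmaxC_nonneg (U : Y → ℝ) : 0 ≤ fmax (fun yo => |optExt U yo|) :=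
  le_trans (by simp [optExt]) (le_fmax (fun yo => |optExt U yo|) none)

/-- the integrand -/
def mfun (U : Y → ℝ) (ε : Option Y → ℝ) : ℝ := fmax (fun yo => optExt U yo + ε yo)

lemma mfun_le_add (V W : Y → ℝ) (ε : Option Y → ℝ) : mfun V ε ≤ mfun W ε + ‖V - W‖ :=
  fmax_le fun yo => by
    have h1 := optExt_le_add V W yo
    have h2 := le_fmax (fun yo => optExt W yo + ε yo) yo
    simp only [mfun]; linarith

lemma lipschitz_mfun (ε : Option Y → ℝ) : LipschitzWith 1 (fun U : Y → ℝ => mfun U ε) := by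
  apply LipschitzWith.of_dist_le_mul
  intro V W
  rw [Real.dist_eq, NNReal.coe_one, one_mul, dist_eq_norm, abs_sub_le_iff]
  constructor
  · have := mfun_le_add V W ε; linarith
  · have := mfun_le_add W V ε
    rw [show W - V = -(V - W) by ring, norm_neg] at this; linarith

lemma mfun_le_add' (U : Y → ℝ) (ε ε' : Option Y → ℝ) : mfun U ε ≤ mfun U ε' + ‖ε - ε'‖ :=
  fmax_le fun yo => by
    have h1 : ε yo ≤ ε' yo + ‖ε - ε'‖ := by
      have h := norm_le_pi_norm (ε - ε') yo
      simp only [Pi.sub_apply, Real.norm_eq_abs] at h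
      linarith [(abs_le.mp h).2]
    have h2 := le_fmax (fun yo => optExt U yo + ε' yo) yo
    simp only [mfun]; linarith

lemma continuous_mfun (U : Y → ℝ) : Continuous (fun ε : Option Y → ℝ => mfun U ε) := by
  apply (LipschitzWith.of_dist_le_mul (K := 1) ?_).continuous
  intro ε ε'
  rw [Real.dist_eq, NNReal.coe_one, one_mul, dist_eq_norm, abs_sub_le_iff]
  constructor
  · have := mfun_le_add' U ε ε'; linarith
  · have := mfun_le_add' U ε' ε
    rw [show ε' - ε = -(ε - ε') by ring, norm_neg] at this; linarith

lemma integrable_mfun (P : Measure (Option Y → ℝ)) [IsProbabilityMeasure P]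
    (hP : Integrable (fun ε => fmax (fun yo => |ε yo|)) P) (U : Y → ℝ) :
    Integrable (fun ε => mfun U ε) P := by
  set C := fmax (fun yo => |optExt U yo|) with hC
  have hg : Integrable (fun ε : Option Y → ℝ => C + fmax (fun yo => |ε yo|)) P :=
    (integrable_const C).add hP
  refine Integrable.mono hg (continuous_mfun U).aestronglyMeasurable ?_
  filter_upwards with ε
  have h1 : |mfun U ε| ≤ C + fmax (fun yo => |ε yo|) := by
    refine (abs_fmax_le _).trans (fmax_le fun yo => ?_)
    have := (abs_add_le (optExt U yo) (ε yo))
    have h2 := optExt_nonneg_bound U yo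
    have h2' : |optExt U yo| ≤ C := (le_fmax (fun yo => |optExt U yo|) yo)
    have h3 := le_fmax (fun yo => |ε yo|) yo
    linarith
  have h4 : (0:ℝ) ≤ C + fmax (fun yo => |ε yo|) := by
    have := fmaxC_nonneg U
    have h5 : (0:ℝ) ≤ fmax (fun yo => |ε yo|) :=
      le_trans (abs_nonneg _) (le_fmax (fun yo => |ε yo|) none)
    linarith
  simpa [Real.norm_eq_abs, abs_of_nonneg h4] using h1

lemma hyperplane_null (a b : Option Y) (hab : a ≠ b) (c : ℝ) :
    (volume : Measure (Option Y → ℝ)) {ε | ε a = ε b + c} = 0 := by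
  classical
  set f : (Option Y → ℝ) →ₗ[ℝ] ℝ := (LinearMap.proj (R := ℝ) (φ := fun _ : Option Y => ℝ) a) - (LinearMap.proj (R := ℝ) (φ := fun _ : Option Y => ℝ) b) with hf
  have hfs : ∀ ε : Option Y → ℝ, f ε = ε a - ε b := fun ε => rfl
  set ε₀ : Option Y → ℝ := fun yo => if yo = a then c else 0 with hε₀
  have hεa : ε₀ a = c := by simp [hε₀]
  have hεb : ε₀ b = 0 := by simp [hε₀, Ne.symm hab]
  have hfε₀ : f ε₀ = c := by rw [hfs, hεa, hεb]; ring
  have hker : LinearMap.ker f ≠ ⊤ := by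
    intro h
    have h1 : f (fun yo => if yo = a then (1:ℝ) else 0) = 0 := by
      rw [LinearMap.ker_eq_top] at h; simp [h]
    rw [hfs] at h1
    simp [Ne.symm hab] at h1
  have hset : {ε : Option Y → ℝ | ε a = ε b + c} =
      (fun x => -ε₀ + x) ⁻¹' (LinearMap.ker f : Set (Option Y → ℝ)) := by
    ext ε
    simp only [Set.mem_setOf_eq, Set.mem_preimage, SetLike.mem_coe, LinearMap.mem_ker, hfs,
      Pi.add_apply, Pi.neg_apply, hεa, hεb]
    constructor <;> intro h <;> linarith
  rw [hset, measure_preimage_add]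
  exact MeasureTheory.Measure.addHaar_submodule _ _ hker

lemma ties_null_volume (U : Y → ℝ) :
    (volume : Measure (Option Y → ℝ))
      {ε | ∃ p : Option Y × Option Y, p.1 ≠ p.2 ∧ optExt U p.1 + ε p.1 = optExt U p.2 + ε p.2}
      = 0 := by
  refine measure_mono_null (fun ε hε => ?_)
    (measure_iUnion_null (s := fun p : Option Y × Option Y =>
      if h : p.1 ≠ p.2 then {ε : Option Y → ℝ | ε p.1 = ε p.2 + (optExt U p.2 - optExt U p.1)}
      else ∅) fun p => ?_)
  · obtain ⟨p, hne, heq⟩ := hε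
    refine Set.mem_iUnion.2 ⟨p, ?_⟩
    rw [dif_pos hne]
    simp only [Set.mem_setOf_eq]; linarith
  · by_cases h : p.1 ≠ p.2
    · rw [dif_pos h]; exact hyperplane_null p.1 p.2 h _
    · rw [dif_neg h]; simp

lemma ae_unique_max (P : Measure (Option Y → ℝ))
    (hac : P ≪ (volume : Measure (Option Y → ℝ))) (U : Y → ℝ) :
    ∀ᵐ ε ∂P, ∃! yo : Option Y,
      ∀ yo' : Option Y, optExt U yo' + ε yo' ≤ optExt U yo + ε yo := by
  have h0 : P {ε | ∃ p : Option Y × Option Y, p.1 ≠ p.2 ∧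
      optExt U p.1 + ε p.1 = optExt U p.2 + ε p.2} = 0 := hac (ties_null_volume U)
  filter_upwards [(MeasureTheory.measure_eq_zero_iff_ae_notMem.mp h0)] with ε hε
  obtain ⟨yo, -, hyo⟩ := Finset.exists_max_image Finset.univ
    (fun yo => optExt U yo + ε yo) Finset.univ_nonempty
  refine ⟨yo, fun yo' => hyo yo' (Finset.mem_univ _), fun yo' h' => ?_⟩
  by_contra hne
  exact hε ⟨(yo', yo), hne, le_antisymm (hyo yo' (Finset.mem_univ _)) (h' yo)⟩
/-- event that `y` is the strict maximizer -/
def strictMaxSet (U : Y → ℝ) (y : Y) : Set (Option Y → ℝ) :=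
  {ε | ∀ yo : Option Y, yo ≠ some y → optExt U yo + ε yo < U y + ε (some y)}

lemma continuous_optExt_apply (yo : Option Y) : Continuous (fun V : Y → ℝ => optExt V yo) := by
  cases yo with
  | none => exact continuous_const
  | some y => exact continuous_apply y

lemma isOpen_strictMaxSet (U : Y → ℝ) (y : Y) : IsOpen (strictMaxSet U y) := by
  have : strictMaxSet U y = ⋂ yo : Option Y,
      {ε : Option Y → ℝ | yo ≠ some y → optExt U yo + ε yo < U y + ε (some y)} := by
    ext ε; simp [strictMaxSet]
  rw [this]
  refine isOpen_iInter_of_finite fun yo => ?_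
  by_cases h : yo = some y
  · simp [h]
  · have : {ε : Option Y → ℝ | yo ≠ some y → optExt U yo + ε yo < U y + ε (some y)} =
        {ε : Option Y → ℝ | optExt U yo + ε yo < U y + ε (some y)} := by
      ext ε; simp [h]
    rw [this]
    exact isOpen_lt (by continuity) (by continuity)

lemma nonempty_strictMaxSet (U : Y → ℝ) (y : Y) : (strictMaxSet U y).Nonempty := by
  classical
  set C := fmax (fun yo => |optExt U yo|) with hC
  refine ⟨fun yo => if yo = some y then 2*C + 1 else 0, fun yo hyo => ?_⟩
  simp only [if_neg hyo, if_true]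
  have h1 : optExt U yo ≤ C := optExt_nonneg_bound U yo
  have h2 : |optExt U (some y)| ≤ C := le_fmax (fun yo => |optExt U yo|) (some y)
  have h3 : -C ≤ U y := by
    have := (abs_le.mp h2).1; simpa [optExt] using this
  have h0 : 0 ≤ C := fmaxC_nonneg U
  linarith

/-- the a.e. derivative of the integrand -/
def derivCLM (U : Y → ℝ) (ε : Option Y → ℝ) : (Y → ℝ) →L[ℝ] ℝ :=
  ∑ y : Y, Set.indicator (strictMaxSet U y)
    (fun _ => ContinuousLinearMap.proj (R := ℝ) (φ := fun _ : Y => ℝ) y) ε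

lemma stronglyMeasurable_derivCLM (U : Y → ℝ) : StronglyMeasurable (derivCLM U) := by
  have hsum : derivCLM U = ∑ y : Y, Set.indicator (strictMaxSet U y)
      (fun _ => ContinuousLinearMap.proj (R := ℝ) (φ := fun _ : Y => ℝ) y) := by
    funext ε; simp [derivCLM, Finset.sum_apply]
  rw [hsum]
  refine Finset.stronglyMeasurable_sum _ fun y _ => ?_
  exact stronglyMeasurable_const.indicator (isOpen_strictMaxSet U y).measurableSet

lemma derivCLM_apply_single (U : Y → ℝ) (ε : Option Y → ℝ) (y : Y) :
    derivCLM U ε (Pi.single y (1:ℝ)) = Set.indicator (strictMaxSet U y) (fun _ => (1:ℝ)) ε := by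
  classical
  rw [derivCLM, ContinuousLinearMap.sum_apply]
  rw [Finset.sum_eq_single y]
  · by_cases h : ε ∈ strictMaxSet U y
    · rw [Set.indicator_of_mem h, Set.indicator_of_mem h]
      simp [ContinuousLinearMap.proj_apply]
    · rw [Set.indicator_of_notMem h, Set.indicator_of_notMem h]
      simp
  · intro y' _ hy'
    by_cases h : ε ∈ strictMaxSet U y'
    · rw [Set.indicator_of_mem h]
      simp [ContinuousLinearMap.proj_apply, Pi.single_apply, hy'.symm]
    · rw [Set.indicator_of_notMem h]; simp
  · intro h; exact absurd (Finset.mem_univ y) h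

/-- the local derivative of `mfun` at a point with a strict maximizer -/
def projOpt : Option Y → ((Y → ℝ) →L[ℝ] ℝ)
  | none => 0
  | some y => ContinuousLinearMap.proj (R := ℝ) (φ := fun _ : Y => ℝ) y

lemma hasFDerivAt_of_strictMax (U : Y → ℝ) (ε : Option Y → ℝ) (yo' : Option Y)
    (h : ∀ yo : Option Y, yo ≠ yo' → optExt U yo + ε yo < optExt U yo' + ε yo') :
    HasFDerivAt (fun V => mfun V ε) (projOpt yo') U := by
  have hT : IsOpen {V : Y → ℝ | ∀ yo : Option Y, yo ≠ yo' →
      optExt V yo + ε yo < optExt V yo' + ε yo'} := by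
    have : {V : Y → ℝ | ∀ yo : Option Y, yo ≠ yo' →
        optExt V yo + ε yo < optExt V yo' + ε yo'} = ⋂ yo : Option Y,
        {V : Y → ℝ | yo ≠ yo' → optExt V yo + ε yo < optExt V yo' + ε yo'} := by
      ext V; simp
    rw [this]
    refine isOpen_iInter_of_finite fun yo => ?_
    by_cases hy : yo = yo'
    · simp [hy]
    · have : {V : Y → ℝ | yo ≠ yo' → optExt V yo + ε yo < optExt V yo' + ε yo'} =
          {V : Y → ℝ | optExt V yo + ε yo < optExt V yo' + ε yo'} := by
        ext V; simp [hy]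
      rw [this]
      exact isOpen_lt (((continuous_optExt_apply yo).add continuous_const))
        (((continuous_optExt_apply yo').add continuous_const))
  have hmem : {V : Y → ℝ | ∀ yo : Option Y, yo ≠ yo' →
      optExt V yo + ε yo < optExt V yo' + ε yo'} ∈ nhds U := hT.mem_nhds h
  have heq : (fun V => mfun V ε) =ᶠ[nhds U] (fun V => optExt V yo' + ε yo') := by
    filter_upwards [hmem] with V hV
    show mfun V ε = optExt V yo' + ε yo'
    rw [mfun]
    refine le_antisymm (fmax_le fun yo => ?_) (le_fmax (fun yo => optExt V yo + ε yo) yo')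
    by_cases hy : yo = yo'
    · subst hy; exact le_refl _
    · exact (hV yo hy).le
  have hd : HasFDerivAt (fun V => optExt V yo' + ε yo') (projOpt yo') U := by
    cases yo' with
    | none =>
      have he : (fun V : Y → ℝ => optExt V none + ε none) = fun _ => 0 + ε none := rfl
      rw [he]
      exact hasFDerivAt_const (0 + ε none) U
    | some y =>
      exact ((ContinuousLinearMap.proj (R := ℝ) (φ := fun _ : Y => ℝ) y).hasFDerivAt
        (x := U)).add_const (ε (some y))
  exact hd.congr_of_eventuallyEq heq
lemma ae_hasFDerivAt (P : Measure (Option Y → ℝ))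
    (hac : P ≪ (volume : Measure (Option Y → ℝ))) (U : Y → ℝ) :
    ∀ᵐ ε ∂P, HasFDerivAt (fun V => mfun V ε) (derivCLM U ε) U := by
  filter_upwards [ae_unique_max P hac U] with ε hε
  obtain ⟨yo', hmax, huniq⟩ := hε
  have hstrict : ∀ yo : Option Y, yo ≠ yo' → optExt U yo + ε yo < optExt U yo' + ε yo' := by
    intro yo hne
    rcases lt_or_eq_of_le (hmax yo) with h | h
    · exact h
    · exfalso
      refine hne (huniq yo fun yo'' => ?_)
      rw [h]; exact hmax yo''
  have hD := hasFDerivAt_of_strictMax U ε yo' hstrict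
  have hCLM : derivCLM U ε = projOpt yo' := by
    rw [derivCLM]
    cases yo' with
    | none =>
      have hnot : ∀ y : Y, ε ∉ strictMaxSet U y := by
        intro y hy
        exact absurd (hy none (by simp)) (not_lt.2 (hstrict (some y) (by simp)).le)
      rw [Finset.sum_eq_zero fun y _ => Set.indicator_of_notMem (hnot y) _]
      rfl
    | some y =>
      have hmem : ε ∈ strictMaxSet U y := fun yo hne => hstrict yo hne
      have hnot : ∀ y' : Y, y' ≠ y → ε ∉ strictMaxSet U y' := by
        intro y' hne hy'
        have h1 := hy' (some y) (by simpa using hne.symm)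
        have h2 := hstrict (some y') (by simpa using hne)
        simp only [optExt, Option.elim] at h1 h2
        linarith
      rw [Finset.sum_eq_single y]
      · rw [Set.indicator_of_mem hmem]; rfl
      · intro y' _ hne; exact Set.indicator_of_notMem (hnot y' hne) _
      · intro habs; exact absurd (Finset.mem_univ y) habs
  rw [hCLM]
  exact hD

lemma emax_hasFDerivAt (P : Measure (Option Y → ℝ)) [IsProbabilityMeasure P]
    (hP : Integrable (fun ε => fmax (fun yo => |ε yo|)) P)
    (hac : P ≪ (volume : Measure (Option Y → ℝ))) (U : Y → ℝ) :
    Integrable (derivCLM U) P ∧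
      HasFDerivAt (Emax P) (∫ ε, derivCLM U ε ∂P) U := by
  have h := hasFDerivAt_integral_of_dominated_loc_of_lip
    (F := fun V ε => mfun V ε) (F' := derivCLM U) (x₀ := U) (bound := fun _ => (1:ℝ))
    (μ := P) (s := Set.univ) Filter.univ_mem
    (Filter.Eventually.of_forall fun V => (continuous_mfun V).aestronglyMeasurable)
    (integrable_mfun P hP U)
    (stronglyMeasurable_derivCLM U).aestronglyMeasurable
    (Filter.Eventually.of_forall fun ε => ?_)
    (integrable_const 1)
    (ae_hasFDerivAt P hac U)
  · refine ⟨h.1, ?_⟩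
    have he : Emax P = fun V => ∫ ε, mfun V ε ∂P := rfl
    rw [he]
    exact h.2
  · have h1 : Real.nnabs (1:ℝ) = 1 := by simp
    rw [h1]
    intro x _ y _
    exact lipschitz_mfun ε x y
lemma emax_fderiv_formula (P : Measure (Option Y → ℝ)) [IsProbabilityMeasure P]
    (hP : Integrable (fun ε => fmax (fun yo => |ε yo|)) P)
    (hac : P ≪ (volume : Measure (Option Y → ℝ))) (U : Y → ℝ) (y : Y) :
    fderiv ℝ (Emax P) U (Pi.single y (1:ℝ)) = (P (strictMaxSet U y)).toReal := by
  obtain ⟨hint, hD⟩ := emax_hasFDerivAt P hP hac U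
  rw [hD.fderiv, ContinuousLinearMap.integral_apply hint]
  have h1 : ∀ ε, derivCLM U ε (Pi.single y (1:ℝ)) =
      Set.indicator (strictMaxSet U y) (fun _ => (1:ℝ)) ε := fun ε => derivCLM_apply_single U ε y
  simp_rw [h1]
  exact integral_indicator_one (isOpen_strictMaxSet U y).measurableSet

lemma prob_pos_strictMaxSet (P : Measure (Option Y → ℝ))
    (hsupp : ∀ s : Set (Option Y → ℝ), IsOpen s → s.Nonempty → 0 < P s) (U : Y → ℝ) (y : Y) :
    0 < P (strictMaxSet U y) :=
  hsupp _ (isOpen_strictMaxSet U y) (nonempty_strictMaxSet U y)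

lemma prob_lt_one_strictMaxSet (P : Measure (Option Y → ℝ)) [IsProbabilityMeasure P]
    (hsupp : ∀ s : Set (Option Y → ℝ), IsOpen s → s.Nonempty → 0 < P s) (U : Y → ℝ) (y : Y) :
    P (strictMaxSet U y) < 1 := by
  classical
  set B : Set (Option Y → ℝ) := {ε | U y + ε (some y) < ε none} with hB
  have hBopen : IsOpen B :=
    isOpen_lt (continuous_const.add (continuous_apply (some y))) (continuous_apply none)
  have hBne : B.Nonempty := by
    refine ⟨fun yo => if yo = none then |U y| + 1 else 0, ?_⟩
    simp only [hB, Set.mem_setOf_eq, if_neg (Option.some_ne_none y), if_true]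
    have := le_abs_self (U y)
    linarith
  have hdisj : Disjoint (strictMaxSet U y) B := by
    rw [Set.disjoint_left]
    intro ε hA hB'
    have h1 := hA none (by simp)
    simp only [optExt, Option.elim] at h1
    exact absurd hB' (not_lt.2 (by linarith : ε none ≤ U y + ε (some y))).elim
  have hle : P (strictMaxSet U y) + P B ≤ 1 := by
    rw [← measure_union hdisj hBopen.measurableSet]
    calc P (strictMaxSet U y ∪ B) ≤ P Set.univ := measure_mono (Set.subset_univ _)
      _ = 1 := measure_univ
  calc P (strictMaxSet U y)
      < P (strictMaxSet U y) + P B :=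
        ENNReal.lt_add_right (measure_ne_top P _) (hsupp B hBopen hBne).ne'
    _ ≤ 1 := hle
lemma optExt_combo (U V : Y → ℝ) (a b : ℝ) (yo : Option Y) :
    optExt (a • U + b • V) yo = a * optExt U yo + b * optExt V yo := by
  cases yo with
  | none => simp [optExt]
  | some y => simp [optExt, smul_eq_mul]

lemma mfun_combo_le (U V : Y → ℝ) {a b : ℝ} (ha : 0 ≤ a) (hb : 0 ≤ b) (hab : a + b = 1)
    (ε : Option Y → ℝ) : mfun (a • U + b • V) ε ≤ a * mfun U ε + b * mfun V ε := by
  refine fmax_le fun yo => ?_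
  have h1 := le_fmax (fun yo => optExt U yo + ε yo) yo
  have h2 := le_fmax (fun yo => optExt V yo + ε yo) yo
  have h5 : optExt (a • U + b • V) yo + ε yo =
      a * (optExt U yo + ε yo) + b * (optExt V yo + ε yo) := by
    rw [optExt_combo]
    linear_combination (- ε yo) * hab
  rw [h5]
  exact add_le_add (mul_le_mul_of_nonneg_left h1 ha) (mul_le_mul_of_nonneg_left h2 hb)

lemma emax_strict_aux (P : Measure (Option Y → ℝ)) [IsProbabilityMeasure P]
    (hP : Integrable (fun ε => fmax (fun yo => |ε yo|)) P)
    (hsupp : ∀ s : Set (Option Y → ℝ), IsOpen s → s.Nonempty → 0 < P s)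
    (U V : Y → ℝ) (y : Y) (hy : V y < U y) {a b : ℝ}
    (ha : 0 < a) (hb : 0 < b) (hab : a + b = 1) :
    Emax P (a • U + b • V) < a * Emax P U + b * Emax P V := by
  classical
  set S : Set (Option Y → ℝ) := {ε | (∀ y' : Y, y' ≠ y →
      U y' + ε (some y') < U y + ε (some y)) ∧ ε none < U y + ε (some y) ∧
      ∀ y' : Y, V y' + ε (some y') < ε none} with hS
  have hSopen : IsOpen S := by
    refine IsOpen.inter ?_ (IsOpen.inter ?_ ?_)
    · show IsOpen {ε : Option Y → ℝ | ∀ y' : Y, y' ≠ y →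
          U y' + ε (some y') < U y + ε (some y)}
      have : {ε : Option Y → ℝ | ∀ y' : Y, y' ≠ y →
          U y' + ε (some y') < U y + ε (some y)} = ⋂ y' : Y,
          {ε : Option Y → ℝ | y' ≠ y → U y' + ε (some y') < U y + ε (some y)} := by
        ext ε; simp
      rw [this]
      refine isOpen_iInter_of_finite fun y' => ?_
      by_cases h : y' = y
      · simp [h]
      · have : {ε : Option Y → ℝ | y' ≠ y → U y' + ε (some y') < U y + ε (some y)} =
            {ε : Option Y → ℝ | U y' + ε (some y') < U y + ε (some y)} := by
          ext ε; simp [h]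
        rw [this]
        exact isOpen_lt (continuous_const.add (continuous_apply _))
          (continuous_const.add (continuous_apply _))
    · exact isOpen_lt (continuous_apply none) (continuous_const.add (continuous_apply _))
    · show IsOpen {ε : Option Y → ℝ | ∀ y' : Y, V y' + ε (some y') < ε none}
      have : {ε : Option Y → ℝ | ∀ y' : Y, V y' + ε (some y') < ε none} = ⋂ y' : Y,
          {ε : Option Y → ℝ | V y' + ε (some y') < ε none} := by
        ext ε; simp
      rw [this]
      exact isOpen_iInter_of_finite fun y' =>
        isOpen_lt (continuous_const.add (continuous_apply _)) (continuous_apply none)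
  have hCU : ∀ y' : Y, |U y'| ≤ fmax (fun yo => |optExt U yo|) := fun y' =>
    le_fmax (fun yo => |optExt U yo|) (some y')
  have hCV : ∀ y' : Y, |V y'| ≤ fmax (fun yo => |optExt V yo|) := fun y' =>
    le_fmax (fun yo => |optExt V yo|) (some y')
  have hCU0 : 0 ≤ fmax (fun yo => |optExt U yo|) := fmaxC_nonneg U
  have hCV0 : 0 ≤ fmax (fun yo => |optExt V yo|) := fmaxC_nonneg V
  set CU := fmax (fun yo => |optExt U yo|)
  set CV := fmax (fun yo => |optExt V yo|)
  set M := CU + CV + 1 with hM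
  have hd : 0 < (U y - V y) / 2 := by linarith
  have hSne : S.Nonempty := by
    refine ⟨fun yo => yo.elim 0 (fun y' => if y' = y then -(U y + V y)/2 else -M), ?_, ?_, ?_⟩
    · intro y' hy'
      simp only [Option.elim, if_neg hy', eq_self_iff_true, if_true]
      have := (abs_le.mp (hCU y')).2
      linarith
    · simp only [Option.elim, eq_self_iff_true, if_true]
      linarith
    · intro y'
      by_cases h : y' = y
      · subst h
        simp only [Option.elim, eq_self_iff_true, if_true]
        linarith
      · simp only [Option.elim, if_neg h]
        have := (abs_le.mp (hCV y')).2
        linarith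
  have hmU : ∀ ε ∈ S, mfun U ε = U y + ε (some y) := by
    intro ε hε
    rw [mfun]
    refine le_antisymm (fmax_le fun yo => ?_)
      (le_fmax (fun yo => optExt U yo + ε yo) (some y))
    cases yo with
    | none => simpa [optExt] using hε.2.1.le
    | some y' =>
      by_cases h : y' = y
      · subst h; exact le_refl _
      · exact (hε.1 y' h).le
  have hmV : ∀ ε ∈ S, mfun V ε = ε none := by
    intro ε hε
    rw [mfun]
    refine le_antisymm (fmax_le fun yo => ?_)
      (by simpa [optExt] using le_fmax (fun yo => optExt V yo + ε yo) none)
    cases yo with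
    | none => simp [optExt]
    | some y' => exact (hε.2.2 y').le
  have hstrict : ∀ ε ∈ S, mfun (a • U + b • V) ε < a * mfun U ε + b * mfun V ε := by
    intro ε hε
    refine fmax_lt fun yo => ?_
    have h5 : optExt (a • U + b • V) yo + ε yo =
        a * (optExt U yo + ε yo) + b * (optExt V yo + ε yo) := by
      rw [optExt_combo]
      linear_combination (- ε yo) * hab
    rw [h5, hmU ε hε, hmV ε hε]
    cases yo with
    | none =>
      have h6 : (0:ℝ) + ε none < U y + ε (some y) := by simpa using hε.2.1
      have h7 := mul_lt_mul_of_pos_left h6 ha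
      simp only [optExt, Option.elim]
      linarith
    | some y' =>
      have h6 : V y' + ε (some y') < ε none := hε.2.2 y'
      have h7 := mul_lt_mul_of_pos_left h6 hb
      have h8 : U y' + ε (some y') ≤ U y + ε (some y) := by
        by_cases h : y' = y
        · subst h; exact le_refl _
        · exact (hε.1 y' h).le
      have h9 := mul_le_mul_of_nonneg_left h8 ha.le
      simp only [optExt, Option.elim] at *
      linarith
  have hIU := integrable_mfun P hP U
  have hIV := integrable_mfun P hP V
  have hIW := integrable_mfun P hP (a • U + b • V)
  set f : (Option Y → ℝ) → ℝ :=
    fun ε => (a * mfun U ε + b * mfun V ε) - mfun (a • U + b • V) ε with hf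
  have hfint : Integrable f P := ((hIU.const_mul a).add (hIV.const_mul b)).sub hIW
  have hf0 : (0:(Option Y → ℝ) → ℝ) ≤ f := fun ε =>
    sub_nonneg.2 (mfun_combo_le U V ha.le hb.le hab ε)
  have hsub : S ⊆ Function.support f := by
    intro ε hε
    rw [Function.mem_support, hf]
    have := hstrict ε hε
    intro h0
    rw [sub_eq_zero] at h0
    linarith
  have hpos : 0 < ∫ ε, f ε ∂P := by
    refine (integral_pos_iff_support_of_nonneg hf0 hfint).2 ?_
    exact lt_of_lt_of_le (hsupp S hSopen hSne) (measure_mono hsub)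
  have hsplit : ∫ ε, f ε ∂P =
      a * Emax P U + b * Emax P V - Emax P (a • U + b • V) := by
    have hfg : Integrable (fun ε => a * mfun U ε + b * mfun V ε) P :=
      (hIU.const_mul a).add (hIV.const_mul b)
    rw [hf]
    rw [integral_sub hfg hIW, integral_add (hIU.const_mul a) (hIV.const_mul b),
      integral_const_mul, integral_const_mul]
    rfl
  rw [hsplit] at hpos
  linarith

lemma emax_strictConvexOn (P : Measure (Option Y → ℝ)) [IsProbabilityMeasure P]
    (hP : Integrable (fun ε => fmax (fun yo => |ε yo|)) P)
    (hsupp : ∀ s : Set (Option Y → ℝ), IsOpen s → s.Nonempty → 0 < P s) :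
    StrictConvexOn ℝ Set.univ (Emax P) := by
  refine ⟨convex_univ, fun U _ V _ hne a b ha hb hab => ?_⟩
  obtain ⟨y, hy⟩ := Function.ne_iff.mp hne
  rw [smul_eq_mul, smul_eq_mul]
  rcases lt_or_gt_of_ne hy with h | h
  · have := emax_strict_aux P hP hsupp V U y h hb ha (by linarith)
    rw [add_comm (b • V) (a • U)] at this
    linarith
  · exact emax_strict_aux P hP hsupp U V y h ha hb hab
end AuxLemmas

/-- **Smoothness of the Emax operator under full support (Daly–Zachary–Williams).**
If `P` has full support and is absolutely continuous w.r.t. Lebesgue measure, then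
(a) the maximum is `P`-a.s. attained at a unique alternative; (b) `G` is strictly
convex and differentiable, with `∂G/∂U_y(U)` equal to the probability that `y` is
the strict maximizer, a probability strictly between 0 and 1. -/
theorem emax_smoothness
    (P : Measure (Option Y → ℝ)) [IsProbabilityMeasure P]
    (hP : Integrable (fun ε => fmax (fun yo => |ε yo|)) P)
    (hsupp : ∀ s : Set (Option Y → ℝ), IsOpen s → s.Nonempty → 0 < P s)
    (hac : P ≪ (volume : Measure (Option Y → ℝ))) :
    -- (a) a.s. unique maximizer
    (∀ U : Y → ℝ, ∀ᵐ ε ∂P, ∃! yo : Option Y,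
      ∀ yo' : Option Y, optExt U yo' + ε yo' ≤ optExt U yo + ε yo) ∧
    -- (b) strict convexity, differentiability, and the derivative formula
    StrictConvexOn ℝ Set.univ (Emax P) ∧
    Differentiable ℝ (Emax P) ∧
    (∀ (U : Y → ℝ) (y : Y),
      fderiv ℝ (Emax P) U (Pi.single y (1 : ℝ)) =
        (P {ε | ∀ yo : Option Y, yo ≠ some y →
            optExt U yo + ε yo < U y + ε (some y)}).toReal ∧
      0 < P {ε | ∀ yo : Option Y, yo ≠ some y →
            optExt U yo + ε yo < U y + ε (some y)} ∧
      P {ε | ∀ yo : Option Y, yo ≠ some y →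
            optExt U yo + ε yo < U y + ε (some y)} < 1) := by
  refine ⟨fun U => ae_unique_max P hac U, emax_strictConvexOn P hP hsupp,
    fun U => ((emax_hasFDerivAt P hP hac U).2).differentiableAt, fun U y => ?_⟩
  exact ⟨emax_fderiv_formula P hP hac U y, prob_pos_strictMaxSet P hsupp U y,
    prob_lt_one_strictMaxSet P hsupp U y⟩

end
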